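/- arXiv:2508.20730 — 5 statements merged into one kernel-verified Lean document; each statement's English description precedes it below -/
import Mathlib

section
/- There exists a constant C > 0 such that for every r ∈ (0, 2) and every pair of differentiable functions a, ψ : [0, ∞) → ℝ satisfying a'(t) = −r·ψ(t) and ψ'(t) = r·a(t) − r²·ψ(t) for all t ≥ 0, one has |a(t)| + |ψ(t)| ≤ C·e^{−r²t/4}·(|a(0)| + |ψ(0)|) for all t ≥ 0. -/
/-!
The quadratic form `L = a² + ψ² - (4/5) r a ψ` is a Lyapunov function for the system: along
solutions, `L' + (r²/2) L = -(r²/10) (3a² - 4raψ + 7ψ²) ≤ 0` as soon as `r² ≤ 21/4`, so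
Grönwall gives `L(t) ≤ e^{-r²t/2} L(0)`. For `|r| ≤ 2` the form `L` is equivalent to `a² + ψ²`
with constants `1/5` and `9/5` independent of `r`, which makes the bound uniform up to the
resonance `r = 2`.
-/

open Real

theorem le_mul_exp_of_hasDerivAt_le_mul {f f' : ℝ → ℝ} {K : ℝ}
    (hf : ∀ t ≥ 0, HasDerivAt f (f' t) t) (bound : ∀ t ≥ 0, f' t ≤ K * f t)
    {t : ℝ} (ht : 0 ≤ t) : f t ≤ f 0 * exp (K * t) := by
  have hgronwall := le_gronwallBound_of_liminf_deriv_right_le (f := f) (f' := f') (ε := 0)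
    (a := 0) (b := t)
    (fun s hs => (hf s hs.1).continuousAt.continuousWithinAt)
    (fun s hs _ hr => (hf s hs.1).hasDerivWithinAt.liminf_right_slope_le hr)
    le_rfl (fun s hs => by simpa using bound s hs.1) t ⟨ht, le_rfl⟩
  rwa [gronwallBound_ε0, sub_zero] at hgronwall

noncomputable def lyapunov (r x y : ℝ) : ℝ := x ^ 2 + y ^ 2 - 4 / 5 * r * x * y

section lyapunov

variable {r : ℝ}

theorem hasDerivAt_lyapunov {a ψ : ℝ → ℝ} {a' ψ' t : ℝ}
    (ha : HasDerivAt a a' t) (hψ : HasDerivAt ψ ψ' t) :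
    HasDerivAt (fun s => lyapunov r (a s) (ψ s))
      (2 * a t * a' + 2 * ψ t * ψ' - 4 / 5 * r * (a' * ψ t + a t * ψ')) t := by
  refine (((ha.pow 2).add (hψ.pow 2)).sub ((ha.const_mul (4 / 5 * r)).mul hψ)).congr_deriv ?_
  push_cast; ring

theorem lyapunov_dissipation (hr : |r| ≤ 2) (x y : ℝ) :
    2 * x * (-r * y) + 2 * y * (r * x - r ^ 2 * y)
        - 4 / 5 * r * (-r * y * y + x * (r * x - r ^ 2 * y))
      ≤ -(r ^ 2 / 2) * lyapunov r x y := by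
  have hr2 : r ^ 2 ≤ 4 := by nlinarith [abs_nonneg r, sq_abs r]
  unfold lyapunov
  nlinarith [sq_nonneg (r * (3 * x - 2 * r * y)), mul_nonneg (sub_nonneg.2 hr2) (sq_nonneg (r * y)),
    sq_nonneg (r * y)]

theorem abs_mul_mul_le_two_mul_abs (hr : |r| ≤ 2) (x y : ℝ) : |r * x * y| ≤ 2 * |x * y| := by
  rw [mul_assoc, abs_mul]
  exact mul_le_mul_of_nonneg_right hr (abs_nonneg _)

theorem sq_abs_add_abs_le_lyapunov (hr : |r| ≤ 2) (x y : ℝ) :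
    (|x| + |y|) ^ 2 ≤ 10 * lyapunov r x y := by
  have hrxy := abs_mul_mul_le_two_mul_abs hr x y
  unfold lyapunov
  nlinarith [abs_le.1 hrxy, sq_nonneg (|x| - |y|), sq_abs x, sq_abs y, abs_mul x y]

theorem lyapunov_le_sq_abs_add_abs (hr : |r| ≤ 2) (x y : ℝ) :
    lyapunov r x y ≤ 9 / 5 * (|x| + |y|) ^ 2 := by
  have hrxy := abs_mul_mul_le_two_mul_abs hr x y
  unfold lyapunov
  nlinarith [abs_le.1 hrxy, sq_abs x, sq_abs y, abs_mul x y, abs_nonneg (x * y)]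

end lyapunov

/-- Uniform low-frequency heat-like decay: there is a constant `C > 0` such that
for every `r ∈ (0, 2)` every solution of `a' = −rψ`, `ψ' = ra − r²ψ` on `[0, ∞)`
satisfies `|a(t)| + |ψ(t)| ≤ C e^{−r²t/4} (|a(0)| + |ψ(0)|)`. -/
theorem low_frequency_decay :
    ∃ C > (0:ℝ), ∀ r : ℝ, 0 < r → r < 2 →
      ∀ a ψ : ℝ → ℝ,
      (∀ t ≥ (0:ℝ), HasDerivAt a (-r * ψ t) t) →
      (∀ t ≥ (0:ℝ), HasDerivAt ψ (r * a t - r^2 * ψ t) t) →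
      ∀ t ≥ (0:ℝ), |a t| + |ψ t| ≤
        C * Real.exp (-r^2*t/4) * (|a 0| + |ψ 0|) := by
  refine ⟨5, by norm_num, fun r hr0 hr2 a ψ ha hψ t ht => ?_⟩
  have hr : |r| ≤ 2 := abs_le.2 ⟨by linarith, hr2.le⟩
  have hL : lyapunov r (a t) (ψ t) ≤ lyapunov r (a 0) (ψ 0) * exp (-(r ^ 2 / 2) * t) :=
    le_mul_exp_of_hasDerivAt_le_mul (fun s hs => hasDerivAt_lyapunov (ha s hs) (hψ s hs))
      (fun s _ => lyapunov_dissipation hr (a s) (ψ s)) ht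
  have hexp : exp (-(r ^ 2 / 2) * t) = exp (-r ^ 2 * t / 4) ^ 2 := by
    rw [← exp_nat_mul]; ring_nf
  refine le_of_sq_le_sq ?_ (by positivity)
  calc (|a t| + |ψ t|) ^ 2 ≤ 10 * lyapunov r (a t) (ψ t) := sq_abs_add_abs_le_lyapunov hr _ _
    _ ≤ 10 * (lyapunov r (a 0) (ψ 0) * exp (-(r ^ 2 / 2) * t)) := by gcongr
    _ ≤ 10 * (9 / 5 * (|a 0| + |ψ 0|) ^ 2 * exp (-(r ^ 2 / 2) * t)) := by
      gcongr; exact lyapunov_le_sq_abs_add_abs hr _ _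
    _ ≤ (5 * exp (-r ^ 2 * t / 4) * (|a 0| + |ψ 0|)) ^ 2 := by
      rw [hexp]; nlinarith [sq_nonneg (exp (-r ^ 2 * t / 4) * (|a 0| + |ψ 0|))]
end

section
/- There exists a constant C > 0 such that for every r ≥ 2√2 and every pair of differentiable functions a, ψ : [0, ∞) → ℝ satisfying a'(t) = −r·ψ(t) and ψ'(t) = r·a(t) − r²·ψ(t) for all t ≥ 0, one has for all t ≥ 0: |a(t)| ≤ C·e^{−t}·(|a(0)| + |ψ(0)|/r) and |ψ(t)| ≤ C·e^{−t}·(|a(0)|/r + |ψ(0)|/r²) + C·e^{−r²t/2}·|ψ(0)|. -/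
/-!
For `r² ≥ 8` the characteristic polynomial `λ² + r²λ + r²` of the system has two real roots
`λ₂ ∈ [-2, -1]` and `λ₃ ∈ [-r², -r²/2]`, with gap `λ₂ - λ₃ ≥ r²/2`. For each root `λ`, the
combination `r a + λ ψ` solves `u' = λ u`, hence equals `e^{λt}` times its initial value.
Solving the two resulting linear equations for `a` and `ψ` divides by `r (λ₂ - λ₃) ≥ r³/2`
and by `λ₂ - λ₃ ≥ r²/2` respectively, which produces the negative powers of `r`.
-/

open Real

theorem eq_exp_mul_of_hasDerivAt {u : ℝ → ℝ} {L : ℝ}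
    (hu : ∀ t ≥ (0:ℝ), HasDerivAt u (L * u t) t) {t : ℝ} (ht : 0 ≤ t) :
    u t = exp (L * t) * u 0 := by
  set g : ℝ → ℝ := fun x => exp (-L * x) * u x
  have hg : ∀ x ≥ (0:ℝ), HasDerivAt g 0 x := by
    intro x hx
    have := ((hasDerivAt_id x).const_mul (-L)).exp.mul (hu x hx)
    exact this.congr_deriv (by simp only [id]; ring)
  have hconst : g t = g 0 :=
    constant_of_has_deriv_right_zero (fun x hx => (hg x hx.1).continuousAt.continuousWithinAt)
      (fun x hx => (hg x hx.1).hasDerivWithinAt) t ⟨ht, le_rfl⟩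
  calc u t = exp (L * t) * g t := by simp only [g, ← mul_assoc, ← exp_add]; simp
    _ = exp (L * t) * u 0 := by rw [hconst]; simp [g]

section Modes

variable {r L : ℝ} {a ψ : ℝ → ℝ}

theorem mode_eq_exp_mul (ha : ∀ t ≥ (0:ℝ), HasDerivAt a (-r * ψ t) t)
    (hψ : ∀ t ≥ (0:ℝ), HasDerivAt ψ (r * a t - r^2 * ψ t) t) (hL : L^2 + r^2 * L + r^2 = 0)
    {t : ℝ} (ht : 0 ≤ t) :
    r * a t + L * ψ t = exp (L * t) * (r * a 0 + L * ψ 0) := by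
  refine eq_exp_mul_of_hasDerivAt (u := fun x => r * a x + L * ψ x) (fun x hx => ?_) ht
  refine (((ha x hx).const_mul r).add ((hψ x hx).const_mul L)).congr_deriv ?_
  linear_combination (-ψ x) * hL

theorem exists_char_roots (hr : 8 ≤ r^2) :
    ∃ L₂ L₃ : ℝ, L₂^2 + r^2 * L₂ + r^2 = 0 ∧ L₃^2 + r^2 * L₃ + r^2 = 0 ∧
      -2 ≤ L₂ ∧ L₂ ≤ -1 ∧ -r^2 ≤ L₃ ∧ L₃ ≤ -r^2 / 2 ∧ r^2 / 2 ≤ L₂ - L₃ := by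
  set s := √(r^4 - 4 * r^2)
  have hs : s^2 = r^4 - 4 * r^2 := sq_sqrt (by nlinarith)
  have hs0 : 0 ≤ s := sqrt_nonneg _
  refine ⟨(-r^2 + s) / 2, (-r^2 - s) / 2, by linear_combination hs / 4,
    by linear_combination hs / 4, ?_, ?_, ?_, ?_, ?_⟩ <;>
    nlinarith [sq_nonneg (s - (r^2 - 2)), sq_nonneg (s - (r^2 - 4)), sq_nonneg (s - r^2)]

theorem abs_mode_le {M : ℝ} (hr : 0 ≤ r) (ha : ∀ t ≥ (0:ℝ), HasDerivAt a (-r * ψ t) t)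
    (hψ : ∀ t ≥ (0:ℝ), HasDerivAt ψ (r * a t - r^2 * ψ t) t) (hL : L^2 + r^2 * L + r^2 = 0)
    (hLM : |L| ≤ M) {t : ℝ} (ht : 0 ≤ t) :
    |r * a t + L * ψ t| ≤ exp (L * t) * (r * |a 0| + M * |ψ 0|) := by
  rw [mode_eq_exp_mul ha hψ hL ht, abs_mul, abs_exp]
  gcongr
  calc |r * a 0 + L * ψ 0| ≤ |r| * |a 0| + |L| * |ψ 0| := by
        rw [← abs_mul, ← abs_mul]; exact abs_add_le _ _
    _ ≤ r * |a 0| + M * |ψ 0| := by rw [abs_of_nonneg hr]; gcongr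

theorem abs_density_le (hr : 8 ≤ r^2) (hr0 : 0 < r)
    (ha : ∀ t ≥ (0:ℝ), HasDerivAt a (-r * ψ t) t)
    (hψ : ∀ t ≥ (0:ℝ), HasDerivAt ψ (r * a t - r^2 * ψ t) t) {t : ℝ} (ht : 0 ≤ t) :
    |a t| ≤ 8 * exp (-t) * (|a 0| + |ψ 0| / r) := by
  obtain ⟨L₂, L₃, hL₂, hL₃, h₂l, h₂u, h₃l, h₃u, hgap⟩ := exists_char_roots hr
  have hl₂ : |L₂| ≤ 2 := abs_le.2 ⟨h₂l, by linarith⟩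
  have hl₃ : |L₃| ≤ r^2 := abs_le.2 ⟨h₃l, by linarith⟩
  have he₂ : exp (L₂ * t) ≤ exp (-t) := by gcongr; nlinarith
  have he₃ : exp (L₃ * t) ≤ exp (-t) := by gcongr; nlinarith
  have hu₂ : |r * a t + L₂ * ψ t| ≤ exp (-t) * (r * |a 0| + 2 * |ψ 0|) :=
    (abs_mode_le hr0.le ha hψ hL₂ hl₂ ht).trans (by gcongr)
  have hu₃ : |r * a t + L₃ * ψ t| ≤ exp (-t) * (r * |a 0| + r^2 * |ψ 0|) :=
    (abs_mode_le hr0.le ha hψ hL₃ hl₃ ht).trans (by gcongr)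
  have hrd : 0 < r * (L₂ - L₃) := mul_pos hr0 (by linarith)
  have hat : a t * (r * (L₂ - L₃)) = L₂ * (r * a t + L₃ * ψ t) - L₃ * (r * a t + L₂ * ψ t) := by
    ring
  calc |a t| = |L₂ * (r * a t + L₃ * ψ t) - L₃ * (r * a t + L₂ * ψ t)| / (r * (L₂ - L₃)) :=
        eq_div_of_mul_eq hrd.ne' (by rw [← hat, abs_mul, abs_of_pos hrd])
    _ ≤ (|L₂| * |r * a t + L₃ * ψ t| + |L₃| * |r * a t + L₂ * ψ t|) / (r * (L₂ - L₃)) := by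
        rw [← abs_mul L₂, ← abs_mul L₃]
        gcongr ?_ / _
        exact abs_sub _ _
    _ ≤ (2 * (exp (-t) * (r * |a 0| + r^2 * |ψ 0|))
        + r^2 * (exp (-t) * (r * |a 0| + 2 * |ψ 0|))) / (r * (r^2 / 2)) := by gcongr
    _ = exp (-t) * ((4 / r^2 + 2) * |a 0| + 8 * (|ψ 0| / r)) := by field_simp; ring
    _ ≤ exp (-t) * (8 * |a 0| + 8 * (|ψ 0| / r)) := by
        gcongr
        have : 4 / r^2 ≤ 1 := by rw [div_le_one (by positivity)]; linarith
        linarith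
    _ = 8 * exp (-t) * (|a 0| + |ψ 0| / r) := by ring

theorem abs_velocity_le (hr : 8 ≤ r^2) (hr0 : 0 < r)
    (ha : ∀ t ≥ (0:ℝ), HasDerivAt a (-r * ψ t) t)
    (hψ : ∀ t ≥ (0:ℝ), HasDerivAt ψ (r * a t - r^2 * ψ t) t) {t : ℝ} (ht : 0 ≤ t) :
    |ψ t| ≤ 8 * exp (-t) * (|a 0| / r + |ψ 0| / r^2) + 8 * exp (-r^2 * t / 2) * |ψ 0| := by
  obtain ⟨L₂, L₃, hL₂, hL₃, h₂l, h₂u, h₃l, h₃u, hgap⟩ := exists_char_roots hr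
  have he₂ : exp (L₂ * t) ≤ exp (-t) := by gcongr; nlinarith
  have he₃ : exp (L₃ * t) ≤ exp (-t) := by gcongr; nlinarith
  have he₃' : exp (L₃ * t) ≤ exp (-r^2 * t / 2) := by gcongr; nlinarith
  have hu₂ : |r * a t + L₂ * ψ t| ≤ exp (-t) * (r * |a 0| + 2 * |ψ 0|) :=
    (abs_mode_le hr0.le ha hψ hL₂ (abs_le.2 ⟨h₂l, by linarith⟩) ht).trans (by gcongr)
  have hu₃ : |r * a t + L₃ * ψ t| ≤ exp (-t) * (r * |a 0|) + exp (-r^2 * t / 2) * (r^2 * |ψ 0|) :=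
    (abs_mode_le hr0.le ha hψ hL₃ (abs_le.2 ⟨h₃l, by linarith⟩) ht).trans
      (by rw [mul_add]; gcongr)
  have hd : 0 < L₂ - L₃ := by linarith
  have hψt : ψ t * (L₂ - L₃) = (r * a t + L₂ * ψ t) - (r * a t + L₃ * ψ t) := by ring
  calc |ψ t| = |(r * a t + L₂ * ψ t) - (r * a t + L₃ * ψ t)| / (L₂ - L₃) :=
        eq_div_of_mul_eq hd.ne' (by rw [← hψt, abs_mul, abs_of_pos hd])
    _ ≤ (|r * a t + L₂ * ψ t| + |r * a t + L₃ * ψ t|) / (L₂ - L₃) := by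
        gcongr ?_ / _
        exact abs_sub _ _
    _ ≤ (exp (-t) * (r * |a 0| + 2 * |ψ 0|) + (exp (-t) * (r * |a 0|)
        + exp (-r^2 * t / 2) * (r^2 * |ψ 0|))) / (r^2 / 2) := by gcongr
    _ = 4 * exp (-t) * (|a 0| / r + |ψ 0| / r^2) + 2 * exp (-r^2 * t / 2) * |ψ 0| := by
        field_simp; ring
    _ ≤ 8 * exp (-t) * (|a 0| / r + |ψ 0| / r^2) + 8 * exp (-r^2 * t / 2) * |ψ 0| := by
        gcongr <;> norm_num

end Modes

/-- Uniform high-frequency damping: there is a constant `C > 0` such that for every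
`r ≥ 2√2` every solution of `a' = −rψ`, `ψ' = ra − r²ψ` on `[0, ∞)` satisfies
`|a(t)| ≤ C e^{−t}(|a(0)| + |ψ(0)|/r)` and
`|ψ(t)| ≤ C e^{−t}(|a(0)|/r + |ψ(0)|/r²) + C e^{−r²t/2}|ψ(0)|`. -/
theorem high_frequency_decay :
    ∃ C > (0:ℝ), ∀ r : ℝ, 2 * Real.sqrt 2 ≤ r →
      ∀ a ψ : ℝ → ℝ,
      (∀ t ≥ (0:ℝ), HasDerivAt a (-r * ψ t) t) →
      (∀ t ≥ (0:ℝ), HasDerivAt ψ (r * a t - r^2 * ψ t) t) →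
      ∀ t ≥ (0:ℝ),
        |a t| ≤ C * Real.exp (-t) * (|a 0| + |ψ 0| / r) ∧
        |ψ t| ≤ C * Real.exp (-t) * (|a 0| / r + |ψ 0| / r^2)
          + C * Real.exp (-r^2*t/2) * |ψ 0| := by
  refine ⟨8, by norm_num, fun r hr a ψ ha hψ t ht => ?_⟩
  have hr0 : 0 < r := lt_of_lt_of_le (by positivity) hr
  have hr8 : 8 ≤ r^2 := by nlinarith [sq_sqrt (show (0:ℝ) ≤ 2 by norm_num), sqrt_nonneg 2]
  exact ⟨abs_density_le hr8 hr0 ha hψ ht, abs_velocity_le hr8 hr0 ha hψ ht⟩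
end

section
/- There exists a constant C > 0 such that for all τ ∈ (0, 1/4], all r ∈ (0, 1], and all differentiable functions u, a, ψ : [0, ∞) → ℝ satisfying u'(t) = −(1/τ)·(u(t) − ψ(t)), a'(t) = −r·ψ(t), and ψ'(t) = r·a(t) − r²·ψ(t) for all t ≥ 0, one has |u(t) − ψ(t)| ≤ e^{−t/τ}·|u(0) − ψ(0)| + C·τ·r·e^{−r²t/4}·(|a(0)| + |ψ(0)|) for all t ≥ 0. -/
/-!
The quadratic form `a² + ψ² - r a ψ` is equivalent to `a² + ψ²` for `|r| ≤ 1`, and along the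
acoustic flow its derivative is exactly `-r²` times itself; hence `a` and `ψ` decay like
`e^{-r² t / 2}`. The relative velocity `v = u - ψ` solves `v' = -v / τ - ψ'`, a damped equation
forced by `ψ' = r a - r² ψ = O(r e^{-r² t / 2})`. Duhamel's formula with the integrating factor
`e^{t / τ}` bounds the forced part by `O(r) / (1 / τ - r² / 2) = O(τ r)`.
-/

open Real Set

section LinearDecay

variable {E : Type*} [NormedAddCommGroup E] [NormedSpace ℝ E] {v g : ℝ → E} {μ ν K : ℝ}

theorem norm_le_of_hasDerivAt_neg_smul_add (hνμ : ν < μ)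
    (hv : ∀ t ≥ (0:ℝ), HasDerivAt v (-μ • v t + g t) t)
    (hg : ∀ t ≥ (0:ℝ), ‖g t‖ ≤ K * exp (-ν * t)) {t : ℝ} (ht : 0 ≤ t) :
    ‖v t‖ ≤ exp (-μ * t) * ‖v 0‖ + K / (μ - ν) * exp (-ν * t) := by
  have hμν : 0 < μ - ν := sub_pos.2 hνμ
  have hK : 0 ≤ K := by simpa using (norm_nonneg _).trans (hg 0 le_rfl)
  have hw : ∀ s ≥ (0:ℝ), HasDerivAt (fun s => exp (μ * s) • v s) (exp (μ * s) • g s) s := by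
    intro s hs
    refine (((hasDerivAt_id' s).const_mul μ).exp.smul (hv s hs)).congr_deriv ?_
    rw [smul_add, smul_smul, mul_one, mul_neg, neg_smul]
    abel
  have hB : ∀ s, HasDerivAt (fun s => ‖v 0‖ + K / (μ - ν) * exp ((μ - ν) * s))
      (K * exp ((μ - ν) * s)) s := by
    intro s
    refine ((((hasDerivAt_id' s).const_mul (μ - ν)).exp.const_mul (K / (μ - ν))).const_add
      ‖v 0‖).congr_deriv ?_
    field_simp
  have hwt : ‖exp (μ * t) • v t‖ ≤ ‖v 0‖ + K / (μ - ν) * exp ((μ - ν) * t) :=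
    image_norm_le_of_norm_deriv_right_le_deriv_boundary
      (fun s hs => (hw s hs.1).continuousAt.continuousWithinAt)
      (fun s hs => (hw s hs.1).hasDerivWithinAt)
      (by simpa using div_nonneg hK hμν.le) hB
      (fun s hs => by
        rw [norm_smul, Real.norm_of_nonneg (exp_pos _).le, sub_mul, sub_eq_add_neg, exp_add,
          ← neg_mul, mul_comm K]
        exact mul_le_mul_of_nonneg_left (hg s hs.1) (exp_pos _).le |>.trans_eq (by ring))
      ⟨ht, le_rfl⟩
  calc ‖v t‖ = exp (-μ * t) * ‖exp (μ * t) • v t‖ := by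
        rw [norm_smul, Real.norm_of_nonneg (exp_pos _).le, ← mul_assoc, ← exp_add]
        simp
    _ ≤ exp (-μ * t) * (‖v 0‖ + K / (μ - ν) * exp ((μ - ν) * t)) :=
        mul_le_mul_of_nonneg_left hwt (exp_pos _).le
    _ = exp (-μ * t) * ‖v 0‖ + K / (μ - ν) * exp (-ν * t) := by
        rw [mul_add, mul_left_comm, ← exp_add]
        ring_nf

theorem norm_le_of_hasDerivAt_neg_smul (hv : ∀ t ≥ (0:ℝ), HasDerivAt v (-μ • v t) t) {t : ℝ}
    (ht : 0 ≤ t) : ‖v t‖ ≤ exp (-μ * t) * ‖v 0‖ := by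
  simpa using norm_le_of_hasDerivAt_neg_smul_add (g := 0) (K := 0) (sub_one_lt μ)
    (by simpa using hv) (by simp) ht

end LinearDecay

section Acoustic

def acousticEnergy (r x y : ℝ) : ℝ := x ^ 2 + y ^ 2 - r * x * y

variable {r x y : ℝ}

theorem abs_mul_mul_le_of_abs_le_one (hr : |r| ≤ 1) : |r * x * y| ≤ (x ^ 2 + y ^ 2) / 2 :=
  calc |r * x * y| = |r| * |x * y| := by rw [mul_assoc, abs_mul]
    _ ≤ 1 * |x * y| := mul_le_mul_of_nonneg_right hr (abs_nonneg _)
    _ ≤ (x ^ 2 + y ^ 2) / 2 := by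
        rw [one_mul, abs_mul]
        nlinarith [sq_abs x, sq_abs y, sq_nonneg (|x| - |y|)]

theorem sq_add_sq_le_two_mul_acousticEnergy (hr : |r| ≤ 1) :
    x ^ 2 + y ^ 2 ≤ 2 * acousticEnergy r x y := by
  have := (abs_le.1 (abs_mul_mul_le_of_abs_le_one (x := x) (y := y) hr)).2
  unfold acousticEnergy
  linarith

theorem acousticEnergy_le (hr : |r| ≤ 1) : acousticEnergy r x y ≤ 3 / 2 * (x ^ 2 + y ^ 2) := by
  have := (abs_le.1 (abs_mul_mul_le_of_abs_le_one (x := x) (y := y) hr)).1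
  unfold acousticEnergy
  linarith

variable {a ψ : ℝ → ℝ}

theorem hasDerivAt_acousticEnergy {t : ℝ} (ha : HasDerivAt a (-r * ψ t) t)
    (hψ : HasDerivAt ψ (r * a t - r ^ 2 * ψ t) t) :
    HasDerivAt (fun s => acousticEnergy r (a s) (ψ s)) (-r ^ 2 * acousticEnergy r (a t) (ψ t)) t :=
  (((ha.pow 2).add (hψ.pow 2)).sub ((ha.const_mul r).mul hψ)).congr_deriv
    (by simp only [acousticEnergy]; ring)

theorem sq_add_sq_le_of_acoustic (hr : |r| ≤ 1)
    (ha : ∀ t ≥ (0:ℝ), HasDerivAt a (-r * ψ t) t)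
    (hψ : ∀ t ≥ (0:ℝ), HasDerivAt ψ (r * a t - r ^ 2 * ψ t) t) {t : ℝ} (ht : 0 ≤ t) :
    a t ^ 2 + ψ t ^ 2 ≤ 3 * exp (-r ^ 2 * t) * (a 0 ^ 2 + ψ 0 ^ 2) := by
  have hdecay := norm_le_of_hasDerivAt_neg_smul (v := fun s => acousticEnergy r (a s) (ψ s))
    (μ := r ^ 2) (fun s hs => by simpa using hasDerivAt_acousticEnergy (ha s hs) (hψ s hs)) ht
  have hnonneg : ∀ s, 0 ≤ acousticEnergy r (a s) (ψ s) := fun s => by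
    linarith [sq_add_sq_le_two_mul_acousticEnergy (x := a s) (y := ψ s) hr,
      sq_nonneg (a s), sq_nonneg (ψ s)]
  rw [Real.norm_of_nonneg (hnonneg t), Real.norm_of_nonneg (hnonneg 0)] at hdecay
  calc a t ^ 2 + ψ t ^ 2 ≤ 2 * acousticEnergy r (a t) (ψ t) :=
        sq_add_sq_le_two_mul_acousticEnergy hr
    _ ≤ 2 * (exp (-r ^ 2 * t) * (3 / 2 * (a 0 ^ 2 + ψ 0 ^ 2))) := by
        gcongr
        exact hdecay.trans (by gcongr; exact acousticEnergy_le hr)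
    _ = 3 * exp (-r ^ 2 * t) * (a 0 ^ 2 + ψ 0 ^ 2) := by ring

theorem abs_add_abs_le_of_acoustic (hr : |r| ≤ 1)
    (ha : ∀ t ≥ (0:ℝ), HasDerivAt a (-r * ψ t) t)
    (hψ : ∀ t ≥ (0:ℝ), HasDerivAt ψ (r * a t - r ^ 2 * ψ t) t) {t : ℝ} (ht : 0 ≤ t) :
    |a t| + |ψ t| ≤ 3 * exp (-(r ^ 2 / 2) * t) * (|a 0| + |ψ 0|) := by
  refine le_of_pow_le_pow_left₀ two_ne_zero (by positivity) ?_
  have hexp : exp (-r ^ 2 * t) = exp (-(r ^ 2 / 2) * t) ^ 2 := by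
    rw [← exp_nat_mul]; ring_nf
  have hsq := sq_add_sq_le_of_acoustic hr ha hψ ht
  rw [hexp] at hsq
  calc (|a t| + |ψ t|) ^ 2 ≤ 2 * (a t ^ 2 + ψ t ^ 2) := by
        nlinarith [sq_abs (a t), sq_abs (ψ t), sq_nonneg (|a t| - |ψ t|)]
    _ ≤ 2 * (3 * exp (-(r ^ 2 / 2) * t) ^ 2 * (a 0 ^ 2 + ψ 0 ^ 2)) := by gcongr
    _ ≤ (3 * exp (-(r ^ 2 / 2) * t) * (|a 0| + |ψ 0|)) ^ 2 := by
        nlinarith [sq_abs (a 0), sq_abs (ψ 0), mul_nonneg (abs_nonneg (a 0)) (abs_nonneg (ψ 0)),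
          sq_nonneg (exp (-(r ^ 2 / 2) * t))]

theorem abs_acoustic_forcing_le (hr : 0 ≤ r) (hr1 : r ≤ 1)
    (ha : ∀ t ≥ (0:ℝ), HasDerivAt a (-r * ψ t) t)
    (hψ : ∀ t ≥ (0:ℝ), HasDerivAt ψ (r * a t - r ^ 2 * ψ t) t) {t : ℝ} (ht : 0 ≤ t) :
    |r * a t - r ^ 2 * ψ t| ≤ 3 * r * (|a 0| + |ψ 0|) * exp (-(r ^ 2 / 2) * t) := by
  have hrr : r ^ 2 ≤ r := by nlinarith
  calc |r * a t - r ^ 2 * ψ t| ≤ r * |a t| + r ^ 2 * |ψ t| := by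
        refine (abs_sub _ _).trans_eq ?_
        rw [abs_mul, abs_mul, abs_of_nonneg hr, abs_of_nonneg (sq_nonneg r)]
    _ ≤ r * (|a t| + |ψ t|) := by nlinarith [abs_nonneg (ψ t)]
    _ ≤ r * (3 * exp (-(r ^ 2 / 2) * t) * (|a 0| + |ψ 0|)) := by
        gcongr; exact abs_add_abs_le_of_acoustic (abs_le.2 ⟨by linarith, hr1⟩) ha hψ ht
    _ = 3 * r * (|a 0| + |ψ 0|) * exp (-(r ^ 2 / 2) * t) := by ring

end Acoustic

/-- Low-frequency estimate for the relative velocity mode: there is `C > 0` such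
that for `τ ∈ (0, 1/4]`, `r ∈ (0, 1]`, and solutions of `u' = −(1/τ)(u − ψ)`,
`a' = −rψ`, `ψ' = ra − r²ψ`, one has
`|u(t) − ψ(t)| ≤ e^{−t/τ}|u(0) − ψ(0)| + Cτr e^{−r²t/4}(|a(0)| + |ψ(0)|)`. -/
theorem relative_velocity_low_frequency :
    ∃ C > (0:ℝ), ∀ τ r : ℝ, 0 < τ → τ ≤ 1/4 → 0 < r → r ≤ 1 →
      ∀ u a ψ : ℝ → ℝ,
      (∀ t ≥ (0:ℝ), HasDerivAt u (-(1/τ) * (u t - ψ t)) t) →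
      (∀ t ≥ (0:ℝ), HasDerivAt a (-r * ψ t) t) →
      (∀ t ≥ (0:ℝ), HasDerivAt ψ (r * a t - r^2 * ψ t) t) →
      ∀ t ≥ (0:ℝ), |u t - ψ t| ≤
        Real.exp (-t/τ) * |u 0 - ψ 0|
          + C * τ * r * Real.exp (-r^2*t/4) * (|a 0| + |ψ 0|) := by
  refine ⟨4, by norm_num, fun τ r hτ hτ4 hr hr1 u a ψ hu ha hψ t ht => ?_⟩
  set S := |a 0| + |ψ 0|
  have hrate : r ^ 2 / 2 < 1 / τ := by
    have : 4 ≤ 1 / τ := by rw [le_div_iff₀ hτ]; linarith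
    nlinarith
  have hrel := norm_le_of_hasDerivAt_neg_smul_add (v := fun s => u s - ψ s)
    (g := fun s => -(r * a s - r ^ 2 * ψ s)) hrate
    (fun s hs => ((hu s hs).sub (hψ s hs)).congr_deriv (by simp only [smul_eq_mul]; ring))
    (fun s hs => by
      rw [norm_neg, Real.norm_eq_abs]; exact abs_acoustic_forcing_le hr.le hr1 ha hψ hs) ht
  have hcoef : 3 * r * S / (1 / τ - r ^ 2 / 2) ≤ 4 * τ * r * S := by
    rw [div_le_iff₀ (sub_pos.2 hrate), mul_sub, show 4 * τ * r * S * (1 / τ) = 4 * r * S by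
      field_simp]
    have hτr : τ * r ^ 2 ≤ 1 / 4 := by nlinarith
    have hrS : 0 ≤ r * S := mul_nonneg hr.le (by positivity)
    nlinarith [mul_nonneg hrS (sub_nonneg.2 hτr)]
  have hexp : exp (-(r ^ 2 / 2) * t) ≤ exp (-r ^ 2 * t / 4) := by
    gcongr; nlinarith [sq_nonneg r]
  rw [Real.norm_eq_abs, Real.norm_eq_abs, show -(1 / τ) * t = -t / τ by ring] at hrel
  refine hrel.trans ?_
  calc exp (-t / τ) * |u 0 - ψ 0| + 3 * r * S / (1 / τ - r ^ 2 / 2) * exp (-(r ^ 2 / 2) * t)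
      ≤ exp (-t / τ) * |u 0 - ψ 0| + 4 * τ * r * S * exp (-r ^ 2 * t / 4) := by
        gcongr
    _ = _ := by ring
end

section
/- There exists a constant C > 0 such that for all τ ∈ (0, 1/4], all r > 0 with τr² ≥ 2, and all differentiable functions Φ, Ψ : [0, ∞) → ℝ satisfying Φ'(t) = −(1/τ)·(Φ(t) − Ψ(t)) and Ψ'(t) = −r²·Ψ(t) for all t ≥ 0, one has |Φ(t) − Ψ(t)| ≤ C·τ·e^{−2t}·(|Φ(0)| + |Ψ(0)|) for all t ≥ 1. -/
/-!
Subtracting `c e^{-r²t}` with `c = r²Ψ(0)/(r² - 1/τ)` from `Φ - Ψ` removes the forcing, so the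
difference decays like `e^{-t/τ}`; this yields the explicit Green's function. For `t ≥ 1` and
`λ ≥ 2`, `λ e^{-λt} ≤ e · e^{-2t}` (from `λ e^{-λ} ≤ e^{-1}`), which turns each exponential
`e^{-λt}` with `λ ≥ 1/τ` into the gain `τ e^{-2t}`.
-/

open Real

theorem eq_exp_mul_smul_of_hasDerivAt {E : Type*} [NormedAddCommGroup E] [NormedSpace ℝ E]
    {f : ℝ → E} {k : ℝ} (hf : ∀ t ≥ 0, HasDerivAt f (k • f t) t) :
    ∀ t ≥ 0, f t = exp (k * t) • f 0 := by
  have hg : ∀ t ≥ (0 : ℝ), HasDerivAt (fun s => exp (-(k * s)) • f s) 0 t := by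
    intro t ht
    have he : HasDerivAt (fun s => exp (-(k * s))) (exp (-(k * t)) * -k) t := by
      simpa using ((hasDerivAt_id t).const_mul k).neg.exp
    refine (he.smul (hf t ht)).congr_deriv ?_
    rw [smul_smul, mul_neg, neg_smul, mul_comm, add_neg_cancel]
  intro t ht
  have hconst := constant_of_has_deriv_right_zero
    (fun x hx => (hg x hx.1).continuousAt.continuousWithinAt)
    (fun x hx => (hg x hx.1).hasDerivWithinAt) t ⟨ht, le_rfl⟩
  simp only [mul_zero, neg_zero, exp_zero, one_smul] at hconst
  rw [← hconst, smul_smul, ← exp_add, add_neg_cancel, exp_zero, one_smul]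

theorem sub_eq_greens_formula {Φ Ψ : ℝ → ℝ} {a b : ℝ} (hab : a ≠ b)
    (hΦ : ∀ t ≥ 0, HasDerivAt Φ (-a * (Φ t - Ψ t)) t) (hΨ : ∀ t ≥ 0, HasDerivAt Ψ (-b * Ψ t) t)
    {t : ℝ} (ht : 0 ≤ t) :
    Φ t - Ψ t =
      exp (-(a * t)) * Φ 0 + (b * exp (-(b * t)) - a * exp (-(a * t))) / (a - b) * Ψ 0 := by
  set c := b * Ψ 0 / (b - a) with hc
  have hΨt : ∀ s ≥ 0, Ψ s = exp (-(b * s)) * Ψ 0 := fun s hs => by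
    rw [eq_exp_mul_smul_of_hasDerivAt hΨ s hs, smul_eq_mul, neg_mul]
  have hg : ∀ s ≥ 0, HasDerivAt (fun s => Φ s - Ψ s + c * exp (-(b * s)))
      (-a * (Φ s - Ψ s + c * exp (-(b * s)))) s := by
    intro s hs
    have he : HasDerivAt (fun s => exp (-(b * s))) (exp (-(b * s)) * -b) s := by
      simpa using ((hasDerivAt_id s).const_mul b).neg.exp
    refine (((hΦ s hs).sub (hΨ s hs)).add (he.const_mul c)).congr_deriv ?_
    rw [hΨt s hs, hc]
    field_simp
    ring
  have hgt := eq_exp_mul_smul_of_hasDerivAt hg t ht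
  simp only [smul_eq_mul, neg_mul, mul_zero, neg_zero, exp_zero, mul_one] at hgt
  rw [eq_sub_of_add_eq hgt, hc]
  field_simp
  ring

theorem mul_exp_neg_mul_le {l t : ℝ} (hl : 2 ≤ l) (ht : 1 ≤ t) :
    l * exp (-(l * t)) ≤ exp 1 * exp (-(2 * t)) := by
  calc l * exp (-(l * t)) = l * exp (-l) * exp (-(l * (t - 1))) := by
        rw [mul_assoc, ← exp_add]; ring_nf
    _ ≤ exp (-1) * exp (-(2 * (t - 1))) := by
        gcongr
        exact mul_exp_neg_le_exp_neg_one l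
    _ = exp 1 * exp (-(2 * t)) := by rw [← exp_add, ← exp_add]; ring_nf

theorem abs_greens_formula_le {a b t x y : ℝ} (ha : 2 ≤ a) (hab : 2 * a ≤ b) (ht : 1 ≤ t) :
    |exp (-(a * t)) * x + (b * exp (-(b * t)) - a * exp (-(a * t))) / (a - b) * y|
      ≤ 2 * exp 1 / a * exp (-(2 * t)) * (|x| + |y|) := by
  have ha0 : 0 < a := by linarith
  have hb0 : 0 < b := by linarith
  set E := exp 1 * exp (-(2 * t)) with hE
  have hE0 : 0 < E := by positivity
  have hEa := mul_exp_neg_mul_le ha ht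
  have hEb := mul_exp_neg_mul_le (l := b) (by linarith) ht
  have hcx : exp (-(a * t)) ≤ E / a := by
    rw [le_div_iff₀ ha0, mul_comm]; exact hEa
  have hcy : |(b * exp (-(b * t)) - a * exp (-(a * t))) / (a - b)| ≤ 2 * E / a := by
    have hnum : |b * exp (-(b * t)) - a * exp (-(a * t))| ≤ 2 * E := by
      have := mul_pos ha0 (exp_pos (-(a * t)))
      have := mul_pos hb0 (exp_pos (-(b * t)))
      rw [abs_sub_le_iff]; constructor <;> linarith
    rw [abs_div, abs_sub_comm a b, abs_of_pos (by linarith : 0 < b - a)]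
    calc _ ≤ 2 * E / (b - a) := by gcongr; linarith
      _ ≤ 2 * E / a := by gcongr; linarith
  calc _ ≤ E / a * |x| + 2 * E / a * |y| := by
        refine (abs_add_le _ _).trans (add_le_add ?_ ?_) <;> rw [abs_mul]
        · rw [abs_of_pos (exp_pos _)]; gcongr
        · gcongr
    _ ≤ 2 * E / a * |x| + 2 * E / a * |y| := by
        gcongr
        linarith
    _ = 2 * exp 1 / a * exp (-(2 * t)) * (|x| + |y|) := by rw [hE]; ring

/-- High-frequency τ-gain for the relative vorticity: there is `C > 0` such that
for `τ ∈ (0, 1/4]`, `r > 0` with `τr² ≥ 2`, and solutions of `Φ' = −(1/τ)(Φ − Ψ)`,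
`Ψ' = −r²Ψ`, one has `|Φ(t) − Ψ(t)| ≤ Cτ e^{−2t}(|Φ(0)| + |Ψ(0)|)` for `t ≥ 1`. -/
theorem relative_vorticity_high_frequency :
    ∃ C > (0:ℝ), ∀ τ r : ℝ, 0 < τ → τ ≤ 1/4 → 0 < r → 2 ≤ τ * r^2 →
      ∀ Φ Ψ : ℝ → ℝ,
      (∀ t ≥ (0:ℝ), HasDerivAt Φ (-(1/τ) * (Φ t - Ψ t)) t) →
      (∀ t ≥ (0:ℝ), HasDerivAt Ψ (-r^2 * Ψ t) t) →
      ∀ t ≥ (1:ℝ), |Φ t - Ψ t| ≤ C * τ * Real.exp (-2*t) * (|Φ 0| + |Ψ 0|) := by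
  refine ⟨2 * exp 1, by positivity, fun τ r hτ hτ4 _ hτr Φ Ψ hΦ hΨ t ht => ?_⟩
  have ha : 2 ≤ 1 / τ := by rw [le_div_iff₀ hτ]; linarith
  have hab : 2 * (1 / τ) ≤ r ^ 2 := by rw [← mul_div_assoc, div_le_iff₀ hτ]; linarith
  rw [sub_eq_greens_formula (by linarith) hΦ hΨ (by linarith)]
  convert abs_greens_formula_le ha hab ht using 1
  rw [neg_mul]
  field_simp
end

section
/- For every α > 0 there exists a constant C_α > 0 such that for all τ ∈ (0, 1] and all t ≥ 0: ∫₀ᵗ e^{−(t−s)/τ}·(1 + s²)^{−α/2} ds ≤ C_α · τ · (1 + t²)^{−α/2}. -/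
/-!
Peetre's inequality `1 + t² ≤ 2 (1 + s²) (1 + (t - s)²)` moves the weight from `s` to `t`:
`(1 + s²)^(-α/2) ≤ 2^(|α|/2) (1 + (t - s)²)^(|α|/2) (1 + t²)^(-α/2)`. What remains is the
kernel moment `∫₀^∞ e^{-u/τ} (1 + u²)^(|α|/2) du`, which after `u = τ v` is at most `τ` times
the finite integral `∫₀^∞ e^{-v} (1 + v²)^(|α|/2) dv`, because `τ ≤ 1`.
-/

open Real Set MeasureTheory Filter Asymptotics

@[fun_prop]
lemma Continuous.one_add_sq_rpow {X : Type*} [TopologicalSpace X] {f : X → ℝ} (hf : Continuous f)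
    (p : ℝ) : Continuous fun x => (1 + f x ^ 2) ^ p :=
  (by fun_prop : Continuous fun x => 1 + f x ^ 2).rpow_const fun _ => Or.inl (by positivity)

lemma one_add_sq_le_two_mul (s t : ℝ) : 1 + t ^ 2 ≤ 2 * ((1 + s ^ 2) * (1 + (t - s) ^ 2)) := by
  nlinarith [sq_nonneg (s - (t - s)), sq_nonneg (s * (t - s))]

lemma one_add_sq_rpow_le {β : ℝ} (hβ : 0 ≤ β) (s t : ℝ) :
    (1 + t ^ 2) ^ (β / 2) ≤ 2 ^ (β / 2) * (1 + s ^ 2) ^ (β / 2) * (1 + (t - s) ^ 2) ^ (β / 2) := by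
  rw [← mul_rpow (by positivity) (by positivity), ← mul_rpow (by positivity) (by positivity),
    mul_assoc]
  exact rpow_le_rpow (by positivity) (one_add_sq_le_two_mul s t) (by positivity)

lemma one_add_sq_rpow_neg_le (α s t : ℝ) :
    (1 + s ^ 2) ^ (-α / 2) ≤
      2 ^ (|α| / 2) * (1 + (t - s) ^ 2) ^ (|α| / 2) * (1 + t ^ 2) ^ (-α / 2) := by
  rcases le_total 0 α with hα | hα
  · have h := one_add_sq_rpow_le hα s t
    rw [abs_of_nonneg hα, neg_div, rpow_neg (by positivity), rpow_neg (by positivity)]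
    field_simp
    linarith
  · rw [abs_of_nonpos hα, ← neg_sq (t - s), neg_sub]
    linarith [one_add_sq_rpow_le (neg_nonneg.2 hα) t s]

lemma integrableOn_exp_neg_mul_one_add_sq_rpow {β : ℝ} (hβ : 0 ≤ β) :
    IntegrableOn (fun v => exp (-v) * (1 + v ^ 2) ^ (β / 2)) (Ioi 0) := by
  have hpoly : (fun v : ℝ => (1 + v ^ 2) ^ (β / 2)) =O[atTop] fun v => v ^ β := by
    refine IsBigO.of_bound (2 ^ (β / 2)) ?_
    filter_upwards [eventually_ge_atTop 1] with v hv
    have hsq : (v ^ 2) ^ (β / 2) = v ^ β := by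
      rw [← rpow_natCast, ← rpow_mul (by linarith)]
      ring_nf
    rw [norm_of_nonneg (by positivity), norm_of_nonneg (by positivity), ← hsq,
      ← mul_rpow (by positivity) (by positivity)]
    exact rpow_le_rpow (by positivity) (by nlinarith) (by positivity)
  have hexp := (isBigO_refl (fun v : ℝ => exp (-v)) atTop).mul
    (hpoly.trans (isLittleO_rpow_exp_pos_mul_atTop β one_half_pos).isBigO)
  refine integrable_of_isBigO_exp_neg one_half_pos (by fun_prop) (hexp.congr_right fun v => ?_)
  rw [← exp_add]
  ring_nf

lemma one_le_integral_exp_neg_mul_one_add_sq_rpow {β : ℝ} (hβ : 0 ≤ β) :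
    1 ≤ ∫ v in Ioi 0, exp (-v) * (1 + v ^ 2) ^ (β / 2) := by
  calc (1 : ℝ) = ∫ v in Ioi 0, exp (-v) := integral_exp_neg_Ioi_zero.symm
    _ ≤ _ := setIntegral_mono_on (by simpa using exp_neg_integrableOn_Ioi 0 one_pos)
        (integrableOn_exp_neg_mul_one_add_sq_rpow hβ) measurableSet_Ioi fun v _ =>
          le_mul_of_one_le_right (exp_pos _).le (one_le_rpow (by nlinarith) (by positivity))

lemma integral_exp_neg_div_mul_one_add_sq_rpow_le {β τ T : ℝ} (hβ : 0 ≤ β) (hτ : 0 < τ)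
    (hτ1 : τ ≤ 1) (hT : 0 ≤ T) :
    ∫ u in (0 : ℝ)..T, exp (-u / τ) * (1 + u ^ 2) ^ (β / 2) ≤
      τ * ∫ v in Ioi 0, exp (-v) * (1 + v ^ 2) ^ (β / 2) := by
  calc ∫ u in (0 : ℝ)..T, exp (-u / τ) * (1 + u ^ 2) ^ (β / 2)
      ≤ ∫ u in (0 : ℝ)..T, exp (-(u / τ)) * (1 + (u / τ) ^ 2) ^ (β / 2) := by
        refine intervalIntegral.integral_mono_on hT
          (Continuous.intervalIntegrable (by fun_prop) _ _)
          (Continuous.intervalIntegrable (by fun_prop) _ _) fun u hu => ?_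
        rw [neg_div]
        gcongr
        exacts [hu.1, le_div_self hu.1 hτ hτ1]
    _ = τ * ∫ v in (0 : ℝ)..T / τ, exp (-v) * (1 + v ^ 2) ^ (β / 2) := by
        rw [intervalIntegral.integral_comp_div (fun v => exp (-v) * (1 + v ^ 2) ^ (β / 2)) hτ.ne',
          zero_div, smul_eq_mul]
    _ ≤ τ * ∫ v in Ioi 0, exp (-v) * (1 + v ^ 2) ^ (β / 2) := by
        rw [intervalIntegral.integral_of_le (by positivity)]
        refine mul_le_mul_of_nonneg_left ?_ hτ.le
        exact setIntegral_mono_set (integrableOn_exp_neg_mul_one_add_sq_rpow hβ)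
          (ae_restrict_of_forall_mem measurableSet_Ioi fun v _ => by positivity)
          Ioc_subset_Ioi_self.eventuallyLE

theorem damped_kernel_convolution_general (α : ℝ) :
    ∃ C > (0:ℝ), ∀ τ : ℝ, 0 < τ → τ ≤ 1 → ∀ t : ℝ, 0 ≤ t →
      (∫ s in (0:ℝ)..t, Real.exp (-(t-s)/τ) * (1 + s^2)^(-α/2)) ≤
        C * τ * (1 + t^2)^(-α/2) := by
  set M := ∫ v in Ioi 0, exp (-v) * (1 + v ^ 2) ^ (|α| / 2)
  have hM : 1 ≤ M := one_le_integral_exp_neg_mul_one_add_sq_rpow (abs_nonneg α)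
  refine ⟨2 ^ (|α| / 2) * M, by positivity, fun τ hτ hτ1 t ht => ?_⟩
  set w := 2 ^ (|α| / 2) * (1 + t ^ 2) ^ (-α / 2)
  calc ∫ s in (0:ℝ)..t, exp (-(t - s) / τ) * (1 + s ^ 2) ^ (-α / 2)
      ≤ ∫ s in (0:ℝ)..t, w * (exp (-(t - s) / τ) * (1 + (t - s) ^ 2) ^ (|α| / 2)) := by
        refine intervalIntegral.integral_mono_on ht
          (Continuous.intervalIntegrable (by fun_prop) _ _)
          (Continuous.intervalIntegrable (by fun_prop) _ _) fun s _ => ?_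
        calc _ ≤ exp (-(t - s) / τ) * (2 ^ (|α| / 2) * (1 + (t - s) ^ 2) ^ (|α| / 2) *
              (1 + t ^ 2) ^ (-α / 2)) := by gcongr; exact one_add_sq_rpow_neg_le α s t
          _ = _ := by ring
    _ = w * ∫ u in (0:ℝ)..t, exp (-u / τ) * (1 + u ^ 2) ^ (|α| / 2) := by
        rw [intervalIntegral.integral_const_mul,
          intervalIntegral.integral_comp_sub_left (fun u => exp (-u / τ) * (1 + u ^ 2) ^ (|α| / 2)),
          sub_self, sub_zero]
    _ ≤ w * (τ * M) := mul_le_mul_of_nonneg_left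
        (integral_exp_neg_div_mul_one_add_sq_rpow_le (abs_nonneg α) hτ hτ1 ht) (by positivity)
    _ = 2 ^ (|α| / 2) * M * τ * (1 + t ^ 2) ^ (-α / 2) := by ring

/-- Convolution estimate for the exponentially damped kernel against a polynomial
weight: for every `α > 0` there is `C > 0` with
`∫₀ᵗ e^{−(t−s)/τ} (1+s²)^{−α/2} ds ≤ Cτ (1+t²)^{−α/2}` for `τ ∈ (0,1]`, `t ≥ 0`. -/
theorem damped_kernel_convolution (α : ℝ) (hα : 0 < α) :
    ∃ C > (0:ℝ), ∀ τ : ℝ, 0 < τ → τ ≤ 1 → ∀ t : ℝ, 0 ≤ t →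
      (∫ s in (0:ℝ)..t, Real.exp (-(t-s)/τ) * (1 + s^2)^(-α/2)) ≤
        C * τ * (1 + t^2)^(-α/2) :=
  damped_kernel_convolution_general α
end
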